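/- arXiv:1710.00592 — 2 statements merged into one kernel-verified Lean document; each statement's English description precedes it below -/
import Mathlib

section
/- Let n ≥ 1, 1 ≤ p < ∞ and L > 0. There exists a constant C > 0 such that for every τ > 0 and every y ∈ ℝⁿ with |y| ≤ L + 1, one has (∫_{{|x| > L+2}} |∇ₓ G(τ, x − y)|^p dx)^{1/p} ≤ C (1 + τ)^{−(n+1)/2 + n/(2p)}. -/
open MeasureTheory ENNReal

/-- The Gaussian heat kernel `G(t,x) = (4πt)^{-n/2} exp(-|x|²/(4t))` on `ℝⁿ`. -/
noncomputable def heatKernel (n : ℕ) (t : ℝ) (x : EuclideanSpace ℝ (Fin n)) : ℝ :=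
  (4 * Real.pi * t) ^ (-(n : ℝ) / 2) * Real.exp (-‖x‖ ^ 2 / (4 * t))

/-!
For `|x| > L+2` and `|y| ≤ L+1` the point `z = x - y` has `|z| ≥ 1`. Since
`|∇G(τ,z)| = |z|/(2τ) · G(τ,z)`, in the self-similar variable `s = |z|²/τ` the gradient is
`c τ^{-(n+1)/2} √s e^{-s/4}`. As `s ≥ 1/τ`, `τ^{-(n+1)/2} ≤ (1+τ)^{-(n+1)/2} (1+s)^{(n+1)/2}`;
the polynomial factor in `s` is absorbed by half of `e^{-s/4}`, and the other half is at most
`exp(-|z|²/(8(1+τ)))`. The `L^p` norm of this Gaussian majorant is an explicit Gaussian integral,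
which contributes the factor `(1+τ)^{n/(2p)}`.
-/

open Real

theorem one_add_rpow_le_mul_exp {k c u : ℝ} (hk : 0 < k) (hc : 0 < c) (hu : 0 ≤ u) :
    (1 + u) ^ k ≤ (1 + c * k) ^ k * exp (u / c) := by
  have hlin : 1 + u ≤ (1 + c * k) * exp (u / (c * k)) :=
    calc 1 + u ≤ (1 + c * k) * (1 + u / (c * k)) := by
          field_simp
          nlinarith [mul_pos hc hk]
      _ ≤ (1 + c * k) * exp (u / (c * k)) := by
          gcongr
          linarith [add_one_le_exp (u / (c * k))]
  calc (1 + u) ^ k ≤ ((1 + c * k) * exp (u / (c * k))) ^ k := by gcongr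
    _ = (1 + c * k) ^ k * exp (u / c) := by
      rw [mul_rpow (by positivity) (exp_pos _).le, ← exp_mul]
      field_simp

theorem rpow_mul_sqrt_le_of_inv_le {τ s b : ℝ} (hτ : 0 < τ) (hs : τ⁻¹ ≤ s) (hb : b ≤ 0) :
    τ ^ b * √s ≤ (1 + τ) ^ b * (1 + s) ^ (1 / 2 - b) := by
  have h1τ : 0 < 1 + τ := by linarith
  have hs₀ : 0 ≤ s := (inv_pos.2 hτ).le.trans hs
  have hτb : τ ^ b = (1 + τ) ^ b * (1 + τ⁻¹) ^ (-b) := by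
    rw [rpow_neg (by positivity), ← div_eq_mul_inv, ← div_rpow h1τ.le (by positivity)]
    congr 1
    field_simp
    ring
  calc τ ^ b * √s ≤ (1 + τ) ^ b * (1 + s) ^ (-b) * (1 + s) ^ (1 / 2 : ℝ) := by
        rw [hτb, sqrt_eq_rpow]
        gcongr <;> first | exact rpow_nonneg hs₀ _ | linarith
    _ = (1 + τ) ^ b * (1 + s) ^ (1 / 2 - b) := by
        rw [mul_assoc, ← Real.rpow_add (by linarith)]
        ring_nf

theorem rpow_sub_half_mul_sqrt_sq_div {τ r : ℝ} (hτ : 0 < τ) (hr : 0 ≤ r) (a : ℝ) :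
    τ ^ (a - 1 / 2) * √(r ^ 2 / τ) = τ ^ a * (r / τ) := by
  rw [Real.rpow_sub hτ, ← sqrt_eq_rpow, sqrt_div' _ hτ.le, sqrt_sq hr,
    div_mul_div_comm, mul_self_sqrt hτ.le, mul_div_assoc]

theorem hasFDerivAt_heatKernel (n : ℕ) (t : ℝ) (z : EuclideanSpace ℝ (Fin n)) :
    HasFDerivAt (heatKernel n t) ((-(2 * t)⁻¹ * heatKernel n t z) • innerSL ℝ z) z := by
  have hG : heatKernel n t =
      fun x ↦ (4 * π * t) ^ (-(n : ℝ) / 2) * exp (-(4 * t)⁻¹ * ‖x‖ ^ 2) := by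
    funext x
    unfold heatKernel
    congr 2
    ring
  rw [hG]
  refine .congr_fderiv
    (((hasStrictFDerivAt_norm_sq z).hasFDerivAt.const_mul _).exp.const_mul _) ?_
  ext v
  simp only [neg_smul, neg_apply, smul_apply, coe_innerSL_apply, nsmul_eq_mul, smul_eq_mul]
  ring

theorem norm_fderiv_heatKernel (n : ℕ) {t : ℝ} (ht : 0 < t) (z : EuclideanSpace ℝ (Fin n)) :
    ‖fderiv ℝ (heatKernel n t) z‖ = ‖z‖ / (2 * t) * heatKernel n t z := by
  have hG : 0 < heatKernel n t z := by unfold heatKernel; positivity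
  rw [(hasFDerivAt_heatKernel n t z).fderiv, norm_smul, innerSL_apply_norm, norm_mul, norm_neg,
    norm_inv, Real.norm_of_nonneg (by positivity), Real.norm_of_nonneg hG.le]
  ring

theorem exists_norm_fderiv_heatKernel_le_gaussian (n : ℕ) :
    ∃ A : ℝ, 0 < A ∧ ∀ τ : ℝ, 0 < τ → ∀ z : EuclideanSpace ℝ (Fin n), 1 ≤ ‖z‖ →
      ‖fderiv ℝ (heatKernel n τ) z‖
        ≤ A * (1 + τ) ^ (-(n : ℝ) / 2 - 1 / 2) * exp (-‖z‖ ^ 2 / (8 * (1 + τ))) := by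
  set a : ℝ := -(n : ℝ) / 2
  set k : ℝ := 1 / 2 - (a - 1 / 2)
  have hb : a - 1 / 2 ≤ 0 := by
    simp only [a]
    linarith [Nat.cast_nonneg (α := ℝ) n]
  have hk : 0 < k := by simp only [k]; linarith
  refine ⟨(4 * π) ^ a / 2 * (1 + 8 * k) ^ k,
    mul_pos (by positivity) (rpow_pos_of_pos (by positivity) k), fun τ hτ z hz ↦ ?_⟩
  set r := ‖z‖
  set s := r ^ 2 / τ with hs_def
  have hs : τ⁻¹ ≤ s := by
    rw [hs_def, div_eq_mul_inv]
    exact le_mul_of_one_le_left (by positivity) (by nlinarith)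
  have h_eq : ‖fderiv ℝ (heatKernel n τ) z‖
      = (4 * π) ^ a / 2 * (τ ^ (a - 1 / 2) * √s) * exp (-(s / 4)) := by
    rw [norm_fderiv_heatKernel n hτ, rpow_sub_half_mul_sqrt_sq_div hτ (norm_nonneg z),
      heatKernel, mul_rpow (by positivity) hτ.le,
      show -(s / 4) = -r ^ 2 / (4 * τ) by rw [hs_def]; ring]
    ring
  have h_pow :
      τ ^ (a - 1 / 2) * √s ≤ (1 + τ) ^ (a - 1 / 2) * ((1 + 8 * k) ^ k * exp (s / 8)) :=
    (rpow_mul_sqrt_le_of_inv_le hτ hs hb).trans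
      (mul_le_mul_of_nonneg_left
        (one_add_rpow_le_mul_exp (c := 8) hk (by norm_num) ((inv_pos.2 hτ).le.trans hs))
        (by positivity))
  have h_exp : exp (s / 8) * exp (-(s / 4)) ≤ exp (-r ^ 2 / (8 * (1 + τ))) := by
    rw [← exp_add, exp_le_exp, hs_def, neg_div]
    calc r ^ 2 / τ / 8 + -(r ^ 2 / τ / 4) = -(r ^ 2 / (8 * τ)) := by ring
      _ ≤ -(r ^ 2 / (8 * (1 + τ))) := by gcongr; linarith
  calc ‖fderiv ℝ (heatKernel n τ) z‖
      = (4 * π) ^ a / 2 * (τ ^ (a - 1 / 2) * √s) * exp (-(s / 4)) := h_eq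
    _ ≤ (4 * π) ^ a / 2 * ((1 + τ) ^ (a - 1 / 2) * ((1 + 8 * k) ^ k * exp (s / 8)))
          * exp (-(s / 4)) := by gcongr
    _ = (4 * π) ^ a / 2 * (1 + 8 * k) ^ k * (1 + τ) ^ (a - 1 / 2)
          * (exp (s / 8) * exp (-(s / 4))) := by ring
    _ ≤ _ := by gcongr

section Gaussian

variable {V : Type*} [NormedAddCommGroup V] [InnerProductSpace ℝ V] [FiniteDimensional ℝ V]
  [MeasurableSpace V] [BorelSpace V]

theorem integral_exp_neg_mul_sq_norm_sub {b : ℝ} (hb : 0 < b) (y : V) :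
    ∫ x, exp (-b * ‖x - y‖ ^ 2) = (π / b) ^ (Module.finrank ℝ V / 2 : ℝ) :=
  (integral_sub_right_eq_self (fun x ↦ exp (-b * ‖x‖ ^ 2)) y).trans
    (GaussianFourier.integral_rexp_neg_mul_sq_norm hb)

theorem integrable_exp_neg_mul_sq_norm_sub {b : ℝ} (hb : 0 < b) (y : V) :
    Integrable fun x ↦ exp (-b * ‖x - y‖ ^ 2) :=
  Integrable.of_integral_ne_zero <| by
    rw [integral_exp_neg_mul_sq_norm_sub hb]
    positivity

theorem setIntegral_rpow_rpow_le_of_le_gaussian {f : V → ℝ} {S : Set V} {M σ p : ℝ} {y : V}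
    (hS : MeasurableSet S) (hM : 0 ≤ M) (hσ : 0 < σ) (hp : 0 < p) (hf₀ : ∀ x, 0 ≤ f x)
    (hf : ∀ x ∈ S, f x ≤ M * exp (-‖x - y‖ ^ 2 / σ)) :
    (∫ x in S, f x ^ p) ^ (1 / p) ≤ M * (π * σ / p) ^ (Module.finrank ℝ V / (2 * p)) := by
  have hg : ∀ x, (M * exp (-‖x - y‖ ^ 2 / σ)) ^ p = M ^ p * exp (-(p / σ) * ‖x - y‖ ^ 2) := by
    intro x
    rw [mul_rpow hM (exp_pos _).le, ← exp_mul]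
    congr 2
    ring
  have h_int : ∫ x in S, f x ^ p ≤ M ^ p * (π / (p / σ)) ^ (Module.finrank ℝ V / 2 : ℝ) :=
    calc ∫ x in S, f x ^ p ≤ ∫ x in S, M ^ p * exp (-(p / σ) * ‖x - y‖ ^ 2) := by
          refine integral_mono_of_nonneg (.of_forall fun x ↦ rpow_nonneg (hf₀ x) p)
            ((integrable_exp_neg_mul_sq_norm_sub (by positivity) y).const_mul _).restrict
            (ae_restrict_of_forall_mem hS fun x hx ↦ ?_)
          exact (rpow_le_rpow (hf₀ x) (hf x hx) hp.le).trans_eq (hg x)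
      _ ≤ ∫ x, M ^ p * exp (-(p / σ) * ‖x - y‖ ^ 2) :=
          setIntegral_le_integral
            ((integrable_exp_neg_mul_sq_norm_sub (by positivity) y).const_mul _)
            (.of_forall fun x ↦ by positivity)
      _ = _ := by rw [integral_const_mul, integral_exp_neg_mul_sq_norm_sub (by positivity)]
  calc (∫ x in S, f x ^ p) ^ (1 / p)
      ≤ (M ^ p * (π / (p / σ)) ^ (Module.finrank ℝ V / 2 : ℝ)) ^ (1 / p) := by
        gcongr
        exact setIntegral_nonneg hS fun x _ ↦ rpow_nonneg (hf₀ x) p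
    _ = M * (π * σ / p) ^ (Module.finrank ℝ V / (2 * p)) := by
        rw [mul_rpow (by positivity) (by positivity), ← rpow_mul hM, ← rpow_mul (by positivity),
          mul_one_div_cancel hp.ne', Real.rpow_one]
        congr 2 <;> field_simp

end Gaussian

theorem heat_kernel_gradient_Lp_away_bound_general (n : ℕ)
    (p : ℝ) (hp : 1 ≤ p) (L : ℝ) :
    ∃ C : ℝ, 0 < C ∧ ∀ τ : ℝ, 0 < τ → ∀ y : EuclideanSpace ℝ (Fin n), ‖y‖ ≤ L + 1 →
      (∫ x in {x : EuclideanSpace ℝ (Fin n) | L + 2 < ‖x‖},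
          ‖fderiv ℝ (heatKernel n τ) (x - y)‖ ^ p) ^ (1 / p)
        ≤ C * (1 + τ) ^ (-((n : ℝ) + 1) / 2 + n / (2 * p)) := by
  have hp₀ : 0 < p := one_pos.trans_le hp
  obtain ⟨A, hA, hgrad⟩ := exists_norm_fderiv_heatKernel_le_gaussian n
  refine ⟨A * (8 * π / p) ^ ((n : ℝ) / (2 * p)), by positivity, fun τ hτ y hy ↦ ?_⟩
  have h1τ : 0 < 1 + τ := by linarith
  have hS : MeasurableSet {x : EuclideanSpace ℝ (Fin n) | L + 2 < ‖x‖} :=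
    measurableSet_lt measurable_const measurable_norm
  have h_Lp := setIntegral_rpow_rpow_le_of_le_gaussian hS (by positivity)
    (by positivity : 0 < 8 * (1 + τ)) hp₀ (fun x ↦ norm_nonneg _)
    fun x (hx : L + 2 < ‖x‖) ↦ hgrad τ hτ (x - y) (by linarith [norm_sub_norm_le x y])
  rw [finrank_euclideanSpace_fin] at h_Lp
  refine h_Lp.trans_eq ?_
  rw [show π * (8 * (1 + τ)) / p = 8 * π / p * (1 + τ) by ring,
    mul_rpow (by positivity) h1τ.le, Real.rpow_add h1τ]
  ring_nf

/-- For `|y| ≤ L+1`, the `L^p`-norm (in `x`) of `∇ₓ G(τ, x-y)` over `{|x| > L+2}`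
is bounded by `C (1+τ)^{-(n+1)/2 + n/(2p)}`. -/
theorem heat_kernel_gradient_Lp_away_bound (n : ℕ) (hn : 1 ≤ n)
    (p : ℝ) (hp : 1 ≤ p) (L : ℝ) (hL : 0 < L) :
    ∃ C : ℝ, 0 < C ∧ ∀ τ : ℝ, 0 < τ → ∀ y : EuclideanSpace ℝ (Fin n), ‖y‖ ≤ L + 1 →
      (∫ x in {x : EuclideanSpace ℝ (Fin n) | L + 2 < ‖x‖},
          ‖fderiv ℝ (heatKernel n τ) (x - y)‖ ^ p) ^ (1 / p)
        ≤ C * (1 + τ) ^ (-((n : ℝ) + 1) / 2 + n / (2 * p)) :=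
  heat_kernel_gradient_Lp_away_bound_general n p hp L
end

section
/- Let c₀ = 2 + √2. For every m > 0, every r with c₀ m < r ≤ 2 c₀ m, and every s with m ≤ s ≤ 2m, one has exp(−(r−s)²/(4m²)) − exp(−(r+s)²/(4m²)) ≥ (1 − e^{−c₀}) e^{−(2c₀−1)²/4} exp(−s²/(4m²)). -/
/-- Pointwise lower bound for the half-line Dirichlet heat kernel with `c₀ = 2 + √2`:
for `0 < m`, `c₀ m < r ≤ 2 c₀ m` and `m ≤ s ≤ 2m`,
`exp(-(r-s)²/(4m²)) - exp(-(r+s)²/(4m²)) ≥ (1-e^{-c₀}) e^{-(2c₀-1)²/4} exp(-s²/(4m²))`. -/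
theorem halfline_kernel_lower_bound (m r s : ℝ) (hm : 0 < m)
    (hr1 : (2 + Real.sqrt 2) * m < r) (hr2 : r ≤ 2 * (2 + Real.sqrt 2) * m)
    (hs1 : m ≤ s) (hs2 : s ≤ 2 * m) :
    (1 - Real.exp (-(2 + Real.sqrt 2))) *
        Real.exp (-(2 * (2 + Real.sqrt 2) - 1) ^ 2 / 4) * Real.exp (-s ^ 2 / (4 * m ^ 2))
      ≤ Real.exp (-(r - s) ^ 2 / (4 * m ^ 2)) - Real.exp (-(r + s) ^ 2 / (4 * m ^ 2)) := by
  set c : ℝ := 2 + Real.sqrt 2 with hc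
  have hsq : (1:ℝ) ≤ Real.sqrt 2 := by
    rw [show (1:ℝ) = Real.sqrt 1 by simp]
    exact Real.sqrt_le_sqrt (by norm_num)
  have hcpos : 0 < c := by rw [hc]; linarith
  have hm2 : (0:ℝ) < m ^ 2 := by positivity
  have key : Real.exp (-(r + s) ^ 2 / (4 * m ^ 2))
      = Real.exp (-(r - s) ^ 2 / (4 * m ^ 2)) * Real.exp (-(r * s) / m ^ 2) := by
    rw [← Real.exp_add]
    congr 1
    field_simp
    ring
  have h1 : Real.exp (-(r * s) / m ^ 2) ≤ Real.exp (-c) := by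
    apply Real.exp_le_exp.mpr
    rw [div_le_iff₀ hm2] at *
    nlinarith [mul_pos hcpos hm, mul_nonneg (le_of_lt (sub_pos.mpr hr1)) (sub_nonneg.mpr hs1),
      mul_nonneg (mul_nonneg hcpos.le hm.le) (sub_nonneg.mpr hs1)]
  have h2 : Real.exp (-(2 * c - 1) ^ 2 / 4) ≤ Real.exp (-(r - s) ^ 2 / (4 * m ^ 2)) := by
    apply Real.exp_le_exp.mpr
    rw [div_le_div_iff₀ (by norm_num) (by positivity)]
    have hrs1 : 0 ≤ r - s := by nlinarith
    have hrs2 : r - s ≤ (2 * c - 1) * m := by nlinarith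
    nlinarith [mul_nonneg hrs1 hrs1]
  have hB : Real.exp (-s ^ 2 / (4 * m ^ 2)) ≤ 1 := by
    apply Real.exp_le_one_iff.mpr
    have heq : -s ^ 2 / (4 * m ^ 2) = -(s ^ 2 / (4 * m ^ 2)) := by ring
    have : (0:ℝ) ≤ s ^ 2 / (4 * m ^ 2) := by positivity
    rw [heq]; linarith
  have hA : (0:ℝ) < Real.exp (-(2 * c - 1) ^ 2 / 4) := Real.exp_pos _
  have hBpos : (0:ℝ) < Real.exp (-s ^ 2 / (4 * m ^ 2)) := Real.exp_pos _
  have hone : 1 - Real.exp (-c) ≤ 1 - Real.exp (-(r * s) / m ^ 2) := by linarith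
  have honepos : 0 ≤ 1 - Real.exp (-c) := by
    have := Real.exp_lt_one_iff.mpr (neg_neg_iff_pos.mpr hcpos)
    linarith
  have hAB : Real.exp (-(2 * c - 1) ^ 2 / 4) * Real.exp (-s ^ 2 / (4 * m ^ 2))
      ≤ Real.exp (-(r - s) ^ 2 / (4 * m ^ 2)) := by
    calc Real.exp (-(2 * c - 1) ^ 2 / 4) * Real.exp (-s ^ 2 / (4 * m ^ 2))
        ≤ Real.exp (-(2 * c - 1) ^ 2 / 4) * 1 := by
          exact mul_le_mul_of_nonneg_left hB hA.le
      _ = Real.exp (-(2 * c - 1) ^ 2 / 4) := mul_one _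
      _ ≤ _ := h2
  calc (1 - Real.exp (-c)) * Real.exp (-(2 * c - 1) ^ 2 / 4) * Real.exp (-s ^ 2 / (4 * m ^ 2))
      = (1 - Real.exp (-c)) * (Real.exp (-(2 * c - 1) ^ 2 / 4) * Real.exp (-s ^ 2 / (4 * m ^ 2))) := by
        ring
    _ ≤ (1 - Real.exp (-(r * s) / m ^ 2)) * Real.exp (-(r - s) ^ 2 / (4 * m ^ 2)) := by
        apply mul_le_mul hone hAB (by positivity) (by linarith [Real.exp_pos (-(r * s) / m ^ 2)])
    _ = Real.exp (-(r - s) ^ 2 / (4 * m ^ 2)) - Real.exp (-(r + s) ^ 2 / (4 * m ^ 2)) := by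
        rw [key]; ring
end
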